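/- A Boolean function f: {0,1}^n → {0,1} (or partial function) is not expressible as (consistent with) a single monomial, given that it has at least one positive example, if and only if there exist two positive examples x, y of f and a negative example r of f such that r is between x and y (i.e., for every coordinate i, r_i = x_i or r_i = y_i). -/

import Mathlib

/-- `x` satisfies every literal in the monomial `M`. -/
def covers {n : ℕ} (M : Finset (Fin n × Bool)) (x : Fin n → Bool) : Prop :=
  ∀ l ∈ M, x l.1 = l.2

/-!
A monomial is preserved under passing to a point between two of its satisfying points, which
gives one direction. Conversely, if the positive examples of `f` are closed under betweenness,
`f` is the conjunction of all literals common to its positive examples: if `x` satisfies them,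
then for every coordinate `j` some positive example agrees with `x` at `j`, and starting from
any positive example we can copy the coordinates of `x` in one at a time, each intermediate
point lying between the previous one and such a positive example.
-/

section Betweenness

variable {ι β : Type*}

def BetweenClosed (P : (ι → β) → Prop) : Prop :=
  ∀ x y r, P x → P y → (∀ i, r i = x i ∨ r i = y i) → P r

theorem BetweenClosed.of_forall_exists_eq [Finite ι] {P : (ι → β) → Prop}
    (hP : BetweenClosed P) {u x : ι → β} (hu : P u) (hx : ∀ j, ∃ v, P v ∧ v j = x j) :
    P x := by
  classical
  cases nonempty_fintype ι
  suffices h : ∀ s : Finset ι, P fun i => if i ∈ s then x i else u i by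
    simpa using h Finset.univ
  intro s
  induction s using Finset.induction_on with
  | empty => simpa using hu
  | insert j s _ ih =>
    obtain ⟨v, hv, hvj⟩ := hx j
    refine hP _ v _ ih hv fun i => ?_
    by_cases hij : i = j
    · subst hij
      simp [hvj]
    · simp [hij]

end Betweenness

section Monomial

variable {n : ℕ}

theorem covers_of_between {M : Finset (Fin n × Bool)} {x y r : Fin n → Bool}
    (hx : covers M x) (hy : covers M y) (hr : ∀ i, r i = x i ∨ r i = y i) : covers M r := by
  intro l hl
  rcases hr l.1 with h | h
  · rw [h]; exact hx l hl
  · rw [h]; exact hy l hl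

open Classical in
noncomputable def commonLiterals (f : (Fin n → Bool) → Bool) : Finset (Fin n × Bool) :=
  {l | ∀ a, f a = true → a l.1 = l.2}

theorem mem_commonLiterals {f : (Fin n → Bool) → Bool} {l : Fin n × Bool} :
    l ∈ commonLiterals f ↔ ∀ a, f a = true → a l.1 = l.2 := by
  simp [commonLiterals]

theorem exists_pos_eq_of_covers_commonLiterals {f : (Fin n → Bool) → Bool} {x : Fin n → Bool}
    (hx : covers (commonLiterals f) x) (j : Fin n) : ∃ v, f v = true ∧ v j = x j := by
  by_contra! h
  have hmem : (j, !x j) ∈ commonLiterals f :=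
    mem_commonLiterals.2 fun a ha => by simpa [Bool.eq_not_iff] using h a ha
  simpa using hx _ hmem

theorem covers_commonLiterals_iff {f : (Fin n → Bool) → Bool}
    (hf : BetweenClosed fun a => f a = true) (hpos : ∃ a, f a = true) (x : Fin n → Bool) :
    covers (commonLiterals f) x ↔ f x = true := by
  refine ⟨fun hx => ?_, fun hx l hl => mem_commonLiterals.1 hl x hx⟩
  obtain ⟨u, hu⟩ := hpos
  exact hf.of_forall_exists_eq hu (exists_pos_eq_of_covers_commonLiterals hx)

end Monomial

/-- A Boolean function `f : {0,1}^n → {0,1}` with at least one positive example is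
*not* expressible as a single monomial if and only if there are two positive examples
`x, y` of `f` and a negative example `r` of `f` such that `r` is between `x` and `y`
(for every coordinate `i`, `r i = x i` or `r i = y i`). -/
theorem stmt12 {n : ℕ} (f : (Fin n → Bool) → Bool) (hpos : ∃ a, f a = true) :
    (¬ ∃ M : Finset (Fin n × Bool), ∀ x, covers M x ↔ f x = true) ↔
    (∃ x y r : Fin n → Bool, f x = true ∧ f y = true ∧ f r = false ∧
      ∀ i, r i = x i ∨ r i = y i) := by
  constructor
  · intro hnot
    by_contra hclosed
    refine hnot ⟨commonLiterals f, covers_commonLiterals_iff ?_ hpos⟩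
    intro x y r hx hy hr
    by_contra hfr
    exact hclosed ⟨x, y, r, hx, hy, by simpa using hfr, hr⟩
  · rintro ⟨x, y, r, hx, hy, hr, hbetween⟩ ⟨M, hM⟩
    have hcov := covers_of_between ((hM x).2 hx) ((hM y).2 hy) hbetween
    simp [(hM r).1 hcov] at hr
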